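/- arXiv:2012.02390 — 2 statements merged into one kernel-verified Lean document; each statement's English description precedes it below -/
import Mathlib

section
/- Dilation-monotonicity of the comonotonic product: let M and M' be integrable random variables and let W be an integrable random variable whose quantile function Q_W is nondecreasing (as any quantile function is). If E[M] = E[M'] and I_M(q) ≥ I_{M'}(q) for all q, then E[Q_M(V) Q_W(V)] ≤ E[Q_{M'}(V) Q_W(V)] for V ~ U[0,1], where the products are integrable. -/
open MeasureTheory ProbabilityTheory Set

/-- Quantile function of a measure on ℝ. -/
noncomputable def quantileFn (μ : Measure ℝ) (q : ℝ) : ℝ :=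
  sInf {x : ℝ | q ≤ (μ (Set.Iic x)).toReal}

/-- Integrated quantile function. -/
noncomputable def iqf (μ : Measure ℝ) (q : ℝ) : ℝ :=
  ∫ s in (0:ℝ)..q, quantileFn μ s

open Filter Topology

section Quantile

variable (μ : Measure ℝ) [IsProbabilityMeasure μ]

lemma quantileFn_eq (q : ℝ) : quantileFn μ q = sInf {x : ℝ | q ≤ cdf μ x} := by
  unfold quantileFn
  congr 1
  ext x
  simp [cdf_eq_real, measureReal_def]

lemma bddBelow_quantile_set {q : ℝ} (hq : 0 < q) : BddBelow {x : ℝ | q ≤ cdf μ x} := by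
  obtain ⟨x₀, hx₀⟩ : ∃ x₀, cdf μ x₀ < q := ((tendsto_cdf_atBot μ).eventually_lt_const hq).exists
  refine ⟨x₀, fun x hx => ?_⟩
  by_contra hlt
  push_neg at hlt
  exact absurd (le_trans hx (monotone_cdf μ hlt.le)) (not_le.mpr hx₀)

lemma nonempty_quantile_set {q : ℝ} (hq : q < 1) : {x : ℝ | q ≤ cdf μ x}.Nonempty := by
  obtain ⟨x₀, hx₀⟩ : ∃ x₀, q < cdf μ x₀ := ((tendsto_cdf_atTop μ).eventually_const_lt hq).exists
  exact ⟨x₀, hx₀.le⟩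

lemma quantileFn_le_iff {q x : ℝ} (h0 : 0 < q) (h1 : q < 1) :
    quantileFn μ q ≤ x ↔ q ≤ cdf μ x := by
  rw [quantileFn_eq]
  constructor
  · intro h
    have hmono : ∀ y ∈ Ioi x, q ≤ cdf μ y := by
      intro y hy
      obtain ⟨z, hz, hzy⟩ := exists_lt_of_csInf_lt (nonempty_quantile_set μ h1)
        (lt_of_le_of_lt h hy)
      exact le_trans hz (monotone_cdf μ hzy.le)
    have hrc : ContinuousWithinAt (cdf μ) (Ioi x) x :=
      ((cdf μ).right_continuous x).mono Ioi_subset_Ici_self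
    exact ge_of_tendsto hrc.tendsto (eventually_nhdsWithin_of_forall hmono)
  · intro h
    exact csInf_le (bddBelow_quantile_set μ h0) h

lemma monotoneOn_quantileFn : MonotoneOn (quantileFn μ) (Ioo (0:ℝ) 1) := by
  intro p hp q hq hpq
  rw [quantileFn_eq, quantileFn_eq]
  exact csInf_le_csInf (bddBelow_quantile_set μ hp.1)
    (nonempty_quantile_set μ hq.2) (fun x hx => le_trans hpq hx)

lemma aemeasurable_quantileFn : AEMeasurable (quantileFn μ) (volume.restrict (Ioo (0:ℝ) 1)) :=
  aemeasurable_restrict_of_monotoneOn measurableSet_Ioo (monotoneOn_quantileFn μ)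

lemma map_quantileFn : Measure.map (quantileFn μ) (volume.restrict (Ioo (0:ℝ) 1)) = μ := by
  have hae := aemeasurable_quantileFn μ
  haveI : IsProbabilityMeasure (volume.restrict (Ioo (0:ℝ) 1)) :=
    ⟨by rw [Measure.restrict_apply_univ]; simp [Real.volume_Ioo]⟩
  haveI := Measure.isProbabilityMeasure_map hae
  refine Measure.ext_of_Iic _ _ (fun x => ?_)
  rw [Measure.map_apply_of_aemeasurable hae measurableSet_Iic,
    Measure.restrict_apply' measurableSet_Ioo]
  have hset : quantileFn μ ⁻¹' Iic x ∩ Ioo 0 1 = Iic (cdf μ x) ∩ Ioo 0 1 := by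
    ext q
    simp only [mem_inter_iff, mem_preimage, mem_Iic, mem_Ioo, and_congr_left_iff]
    intro h
    exact quantileFn_le_iff μ h.1 h.2
  rw [hset, ← ofReal_cdf μ x]
  have h0 : 0 ≤ cdf μ x := cdf_nonneg μ x
  have h1 : cdf μ x ≤ 1 := cdf_le_one μ x
  rcases eq_or_lt_of_le h1 with h1' | h1'
  · rw [h1']
    have : Iic (1:ℝ) ∩ Ioo 0 1 = Ioo 0 1 :=
      inter_eq_self_of_subset_right (fun y hy => hy.2.le)
    rw [this]
    simp [Real.volume_Ioo]
  · have : Iic (cdf μ x) ∩ Ioo 0 1 = Ioc 0 (cdf μ x) := by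
      ext q
      simp only [mem_inter_iff, mem_Iic, mem_Ioo, mem_Ioc]
      constructor
      · rintro ⟨h, h0q, _⟩; exact ⟨h0q, h⟩
      · rintro ⟨h0q, h⟩; exact ⟨h, h0q, lt_of_le_of_lt h h1'⟩
    rw [this, Real.volume_Ioc, sub_zero]

lemma integrableOn_quantileFn (hμ : Integrable (fun x : ℝ => x) μ) :
    IntegrableOn (quantileFn μ) (Ioo (0:ℝ) 1) := by
  have h1 : Integrable (fun x : ℝ => x)
      (Measure.map (quantileFn μ) (volume.restrict (Ioo (0:ℝ) 1))) := by
    rw [map_quantileFn μ]; exact hμ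
  have h2 := (integrable_map_measure aestronglyMeasurable_id (aemeasurable_quantileFn μ)).mp h1
  simpa [Function.comp, IntegrableOn] using h2

lemma integral_quantileFn (hμ : Integrable (fun x : ℝ => x) μ) :
    ∫ q in Ioo (0:ℝ) 1, quantileFn μ q = ∫ x, x ∂μ := by
  have h : ∫ x, x ∂(Measure.map (quantileFn μ) (volume.restrict (Ioo (0:ℝ) 1)))
      = ∫ q in Ioo (0:ℝ) 1, quantileFn μ q :=
    integral_map (aemeasurable_quantileFn μ) aestronglyMeasurable_id
  rw [map_quantileFn μ] at h
  exact h.symm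

lemma iqf_eq_setIntegral {q : ℝ} (hq : 0 ≤ q) :
    iqf μ q = ∫ s in Ioo (0:ℝ) q, quantileFn μ s := by
  rw [iqf, intervalIntegral.integral_of_le hq]
  exact (setIntegral_congr_set Ioo_ae_eq_Ioc).symm

end Quantile

lemma core_lemma {h g : ℝ → ℝ} (hg : Monotone g) (hm : StronglyMeasurable h)
    (hhi : IntegrableOn h (Ioo (0:ℝ) 1))
    (hhgi : IntegrableOn (fun v => h v * g v) (Ioo (0:ℝ) 1))
    (hH : ∀ q ∈ Icc (0:ℝ) 1, 0 ≤ ∫ v in Ioo (0:ℝ) q, h v)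
    (hH1 : ∫ v in Ioo (0:ℝ) 1, h v = 0) :
    ∫ v in Ioo (0:ℝ) 1, h v * g v ≤ 0 := by
  have hIoc : IntegrableOn h (Ioc (0:ℝ) 1) := by
    rwa [IntegrableOn, Measure.restrict_congr_set Ioo_ae_eq_Ioc] at hhi
  have split : ∀ q, 0 ≤ q → q ≤ 1 →
      (∫ v in Ioo (0:ℝ) q, h v) + ∫ v in Ioo q 1, h v = ∫ v in Ioo (0:ℝ) 1, h v := by
    intro q h0 h1
    rw [setIntegral_congr_set (Ioo_ae_eq_Ioc (a := (0:ℝ)) (b := q)),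
      setIntegral_congr_set (Ioo_ae_eq_Ioc (a := q) (b := (1:ℝ))),
      setIntegral_congr_set (Ioo_ae_eq_Ioc (a := (0:ℝ)) (b := (1:ℝ))),
      ← Ioc_union_Ioc_eq_Ioc h0 h1,
      setIntegral_union (Set.Ioc_disjoint_Ioc_of_le le_rfl) measurableSet_Ioc
        (hIoc.mono_set (Ioc_subset_Ioc_right h1)) (hIoc.mono_set (Ioc_subset_Ioc_left h0))]
  have inner_le : ∀ t : ℝ, ∫ v in Ioo (0:ℝ) 1, (if t < g v then h v else 0) ≤ 0 := by
    intro t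
    set S : Set ℝ := {v ∈ Icc (0:ℝ) 1 | t < g v} with hS
    set q : ℝ := sInf (insert 1 S) with hqdef
    have hbdd : BddBelow (insert 1 S) := by
      refine ⟨0, ?_⟩
      rintro y (rfl | hy)
      · exact zero_le_one
      · exact hy.1.1
    have hq1 : q ≤ 1 := csInf_le hbdd (mem_insert _ _)
    have hq0 : 0 ≤ q := by
      refine le_csInf (insert_nonempty _ _) ?_
      rintro y (rfl | hy)
      · exact zero_le_one
      · exact hy.1.1
    have hset : (fun v => if t < g v then h v else 0) = ({v | t < g v}).indicator h := by
      ext v; simp [Set.indicator_apply]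
    rw [hset, setIntegral_indicator (measurableSet_lt measurable_const hg.measurable)]
    have sub1 : Ioo q 1 ⊆ Ioo 0 1 ∩ {v | t < g v} := by
      intro v hv
      obtain ⟨w, hw, hwv⟩ := exists_lt_of_csInf_lt (insert_nonempty _ _) hv.1
      rcases hw with rfl | hw
      · exact absurd hv.2 (not_lt.mpr hwv.le)
      · exact ⟨⟨lt_of_le_of_lt hq0 hv.1, hv.2⟩, lt_of_lt_of_le hw.2 (hg hwv.le)⟩
    have sub2 : Ioo 0 1 ∩ {v | t < g v} ⊆ Icc q 1 := by
      rintro v ⟨hv1, hv2⟩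
      exact ⟨csInf_le hbdd (mem_insert_of_mem _ ⟨⟨hv1.1.le, hv1.2.le⟩, hv2⟩), hv1.2.le⟩
    have hae : (Ioo (0:ℝ) 1 ∩ {v | t < g v} : Set ℝ) =ᵐ[volume] (Ioo q 1 : Set ℝ) := by
      rw [MeasureTheory.ae_eq_set]
      constructor
      · refine measure_mono_null (fun v hv => ?_)
          (((Set.finite_singleton (1:ℝ)).insert q).measure_zero volume)
        obtain ⟨hv1, hv2⟩ := hv
        have hvIcc := sub2 hv1
        by_cases hvq : v = q
        · exact Or.inl hvq
        · right
          have hqv : q < v := lt_of_le_of_ne hvIcc.1 (Ne.symm hvq)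
          by_contra hv1'
          exact hv2 ⟨hqv, lt_of_le_of_ne hvIcc.2 hv1'⟩
      · have he : Ioo q 1 \ (Ioo (0:ℝ) 1 ∩ {v | t < g v} : Set ℝ) = ∅ := by
          rw [diff_eq_empty]; exact sub1
        rw [he]; simp
    rw [setIntegral_congr_set hae]
    have hsplit := split q hq0 hq1
    have hHq := hH q ⟨hq0, hq1⟩
    linarith
  set c := g 0 with hc
  set T := g 1 with hT
  have hcT : c ≤ T := hg zero_le_one
  have hmulc : IntegrableOn (fun v => h v * c) (Ioo (0:ℝ) 1) := hhi.mul_const c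
  have hgci : IntegrableOn (fun v => h v * (g v - c)) (Ioo (0:ℝ) 1) := by
    have heq : (fun v => h v * (g v - c)) = fun v => h v * g v - h v * c := by
      ext v; ring
    rw [heq]; exact hhgi.sub hmulc
  have hdecomp : ∫ v in Ioo (0:ℝ) 1, h v * g v
      = (∫ v in Ioo (0:ℝ) 1, h v * (g v - c)) + ∫ v in Ioo (0:ℝ) 1, h v * c := by
    rw [← integral_add hgci hmulc]
    apply integral_congr_ae
    filter_upwards with v
    ring
  have hc0 : ∫ v in Ioo (0:ℝ) 1, h v * c = 0 := by
    rw [integral_mul_const, hH1, zero_mul]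
  have hFmeas : Measurable (fun p : ℝ × ℝ => if p.2 < g p.1 then h p.1 else 0) :=
    Measurable.ite (measurableSet_lt measurable_snd (hg.measurable.comp measurable_fst))
      (hm.measurable.comp measurable_fst) measurable_const
  have hFint : Integrable (Function.uncurry fun v t => if t < g v then h v else 0)
      ((volume.restrict (Ioo (0:ℝ) 1)).prod (volume.restrict (Icc c T))) := by
    have hbound : Integrable (fun p : ℝ × ℝ => |h p.1| * 1)
        ((volume.restrict (Ioo (0:ℝ) 1)).prod (volume.restrict (Icc c T))) :=
      Integrable.mul_prod hhi.abs (integrable_const 1)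
    refine hbound.mono' hFmeas.aestronglyMeasurable ?_
    filter_upwards with p
    by_cases hp : p.2 < g p.1 <;> simp [Function.uncurry, hp, abs_nonneg]
  have hswap : ∫ v in Ioo (0:ℝ) 1, ∫ t in Icc c T, (if t < g v then h v else 0)
      = ∫ t in Icc c T, ∫ v in Ioo (0:ℝ) 1, (if t < g v then h v else 0) :=
    integral_integral_swap hFint
  have hpoint : ∀ v ∈ Ioo (0:ℝ) 1,
      h v * (g v - c) = ∫ t in Icc c T, (if t < g v then h v else 0) := by
    intro v hv
    have hgl : c ≤ g v := hg hv.1.le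
    have hgu : g v ≤ T := hg hv.2.le
    have heq : (fun t => if t < g v then h v else 0) = (Iio (g v)).indicator (fun _ => h v) := by
      ext u; simp [Set.indicator_apply, mem_Iio]
    rw [heq, setIntegral_indicator measurableSet_Iio]
    have hinter : Icc c T ∩ Iio (g v) = Ico c (g v) := by
      ext u
      simp only [mem_inter_iff, mem_Icc, mem_Iio, mem_Ico]
      constructor
      · rintro ⟨⟨h1, _⟩, h2⟩; exact ⟨h1, h2⟩
      · rintro ⟨h1, h2⟩; exact ⟨⟨h1, le_trans h2.le hgu⟩, h2⟩
    rw [hinter, setIntegral_const, Real.volume_real_Ico_of_le hgl, smul_eq_mul]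
    ring
  have hkey : ∫ v in Ioo (0:ℝ) 1, h v * (g v - c)
      = ∫ t in Icc c T, ∫ v in Ioo (0:ℝ) 1, (if t < g v then h v else 0) := by
    rw [setIntegral_congr_fun measurableSet_Ioo hpoint]
    exact hswap
  rw [hdecomp, hc0, add_zero, hkey]
  exact integral_nonpos inner_le

set_option maxHeartbeats 1000000 in
/-- dilation-monotonicity of the comonotonic product: if `M ⪯_cx M'`
(equal means and `I_M(q) ≥ I_{M'}(q)` for all `q ∈ [0,1]`) and `W` is integrable
with the quantile products integrable, then
`E[Q_M(V) Q_W(V)] ≤ E[Q_{M'}(V) Q_W(V)]` for `V ∼ U[0,1]`. -/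
theorem stmt_6 (μ μ' ρ : Measure ℝ)
    [IsProbabilityMeasure μ] [IsProbabilityMeasure μ'] [IsProbabilityMeasure ρ]
    (hμ : Integrable (fun x : ℝ => x) μ) (hμ' : Integrable (fun x : ℝ => x) μ')
    (hρ : Integrable (fun x : ℝ => x) ρ)
    (hmean : ∫ x, x ∂μ = ∫ x, x ∂μ')
    (hiqf : ∀ q ∈ Set.Icc (0:ℝ) 1, iqf μ' q ≤ iqf μ q)
    (hint : IntegrableOn (fun v => quantileFn μ v * quantileFn ρ v) (Set.Icc (0:ℝ) 1))
    (hint' : IntegrableOn (fun v => quantileFn μ' v * quantileFn ρ v) (Set.Icc (0:ℝ) 1)) :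
    ∫ v in Set.Icc (0:ℝ) 1, quantileFn μ v * quantileFn ρ v ≤
      ∫ v in Set.Icc (0:ℝ) 1, quantileFn μ' v * quantileFn ρ v := by
  set Q := quantileFn μ with hQdef
  set Q' := quantileFn μ' with hQ'def
  set R := quantileFn ρ with hRdef
  have hQi : IntegrableOn Q (Ioo (0:ℝ) 1) := integrableOn_quantileFn μ hμ
  have hQ'i : IntegrableOn Q' (Ioo (0:ℝ) 1) := integrableOn_quantileFn μ' hμ'
  have hRi : IntegrableOn R (Ioo (0:ℝ) 1) := integrableOn_quantileFn ρ hρ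
  have hQRi : IntegrableOn (fun v => Q v * R v) (Ioo (0:ℝ) 1) :=
    hint.mono_set Ioo_subset_Icc_self
  have hQ'Ri : IntegrableOn (fun v => Q' v * R v) (Ioo (0:ℝ) 1) :=
    hint'.mono_set Ioo_subset_Icc_self
  -- the difference
  set h : ℝ → ℝ := fun v => Q v - Q' v with hhdef
  have hhi : IntegrableOn h (Ioo (0:ℝ) 1) := hQi.sub hQ'i
  have hhRi : IntegrableOn (fun v => h v * R v) (Ioo (0:ℝ) 1) := by
    have heq : (fun v => h v * R v) = fun v => Q v * R v - Q' v * R v := by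
      ext v; simp [hhdef]; ring
    rw [heq]; exact hQRi.sub hQ'Ri
  have hH : ∀ q ∈ Icc (0:ℝ) 1, 0 ≤ ∫ v in Ioo (0:ℝ) q, h v := by
    intro q hq
    have h1 : Ioo (0:ℝ) q ⊆ Ioo (0:ℝ) 1 := Ioo_subset_Ioo_right hq.2
    have : ∫ v in Ioo (0:ℝ) q, h v
        = (∫ v in Ioo (0:ℝ) q, Q v) - ∫ v in Ioo (0:ℝ) q, Q' v :=
      integral_sub (hQi.mono_set h1) (hQ'i.mono_set h1)
    rw [this, ← iqf_eq_setIntegral μ hq.1, ← iqf_eq_setIntegral μ' hq.1]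
    linarith [hiqf q hq]
  have hH1 : ∫ v in Ioo (0:ℝ) 1, h v = 0 := by
    rw [integral_sub hQi hQ'i, integral_quantileFn μ hμ, integral_quantileFn μ' hμ',
      hmean, sub_self]
  -- measurable representative
  obtain ⟨h', hm', heq'⟩ : ∃ h' : ℝ → ℝ, StronglyMeasurable h'
      ∧ h =ᵐ[volume.restrict (Ioo (0:ℝ) 1)] h' := by
    have := hhi.aestronglyMeasurable
    exact ⟨this.mk h, this.stronglyMeasurable_mk, this.ae_eq_mk⟩
  have hhi' : IntegrableOn h' (Ioo (0:ℝ) 1) := hhi.congr heq'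
  have hhRi' : IntegrableOn (fun v => h' v * R v) (Ioo (0:ℝ) 1) := by
    refine hhRi.congr ?_
    filter_upwards [heq'] with v hv
    rw [hv]
  have hH' : ∀ q ∈ Icc (0:ℝ) 1, 0 ≤ ∫ v in Ioo (0:ℝ) q, h' v := by
    intro q hq
    have hsub : Ioo (0:ℝ) q ⊆ Ioo (0:ℝ) 1 := Ioo_subset_Ioo_right hq.2
    have : ∫ v in Ioo (0:ℝ) q, h' v = ∫ v in Ioo (0:ℝ) q, h v :=
      (integral_congr_ae (ae_restrict_of_ae_restrict_of_subset hsub heq')).symm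
    rw [this]; exact hH q hq
  have hH1' : ∫ v in Ioo (0:ℝ) 1, h' v = 0 := by
    rw [← integral_congr_ae heq']; exact hH1
  -- clamping sequence
  set a : ℕ → ℝ := fun n => 1 / (n + 2) with hadef
  set b : ℕ → ℝ := fun n => 1 - 1 / (n + 2) with hbdef
  have ha0 : ∀ n, 0 < a n := by
    intro n
    simp only [hadef]
    positivity
  have hahalf : ∀ n, a n ≤ 1 / 2 := by
    intro n
    have h2 : (2:ℝ) ≤ (n:ℝ) + 2 := by
      have : (0:ℝ) ≤ (n:ℝ) := Nat.cast_nonneg n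
      linarith
    simp only [hadef]
    exact one_div_le_one_div_of_le two_pos h2
  have hab : ∀ n, a n ≤ b n := fun n => by
    have := hahalf n; simp only [hadef, hbdef]; linarith
  have hb1 : ∀ n, b n < 1 := fun n => by
    have := ha0 n; simp only [hbdef]; linarith
  have hhalfb : ∀ n, 1 / 2 ≤ b n := fun n => by
    have := hahalf n; simp only [hbdef]; linarith
  have hmemIoo : ∀ n (v : ℝ), min (max v (a n)) (b n) ∈ Ioo (0:ℝ) 1 := by
    intro n v
    constructor
    · exact lt_min (lt_of_lt_of_le (ha0 n) (le_max_right _ _)) (lt_of_lt_of_le (ha0 n) (hab n))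
    · exact lt_of_le_of_lt (min_le_right _ _) (hb1 n)
  have hanIoo : ∀ n, a n ∈ Ioo (0:ℝ) 1 := fun n => ⟨ha0 n, lt_of_le_of_lt (hab n) (hb1 n)⟩
  have hbnIoo : ∀ n, b n ∈ Ioo (0:ℝ) 1 := fun n => ⟨lt_of_lt_of_le (ha0 n) (hab n), hb1 n⟩
  set g : ℕ → ℝ → ℝ := fun n v => R (min (max v (a n)) (b n)) with hgdef
  have hgmono : ∀ n, Monotone (g n) := by
    intro n x y hxy
    exact monotoneOn_quantileFn ρ (hmemIoo n x) (hmemIoo n y)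
      (min_le_min (max_le_max hxy le_rfl) le_rfl)
  have habs : ∀ p z q : ℝ, p ≤ z → z ≤ q → |z| ≤ |p| + |q| := by
    intro p z q h1 h2
    rw [abs_le]
    constructor
    · have := neg_abs_le p
      have := abs_nonneg q
      linarith
    · have := le_abs_self q
      have := abs_nonneg p
      linarith
  have hgbdd : ∀ n (v : ℝ), ‖g n v‖ ≤ |R (a n)| + |R (b n)| := by
    intro n v
    have hl : R (a n) ≤ g n v := monotoneOn_quantileFn ρ (hanIoo n) (hmemIoo n v)
      (le_min (le_max_right v (a n)) (hab n))
    have hu : g n v ≤ R (b n) := monotoneOn_quantileFn ρ (hmemIoo n v) (hbnIoo n)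
      (min_le_right _ _)
    rw [Real.norm_eq_abs]
    exact habs _ _ _ hl hu
  have hgiInt : ∀ n, IntegrableOn (fun v => h' v * g n v) (Ioo (0:ℝ) 1) := by
    intro n
    have h1 := hhi'.bdd_mul ((hgmono n).measurable.aestronglyMeasurable)
      (Filter.Eventually.of_forall (hgbdd n))
    refine h1.congr ?_
    filter_upwards with v
    ring
  have hcore : ∀ n, ∫ v in Ioo (0:ℝ) 1, h' v * g n v ≤ 0 := fun n =>
    core_lemma (hgmono n) hm' hhi' (hgiInt n) hH' hH1'
  set C : ℝ := |R (1/2)| with hCdef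
  have hhalfIoo : (1:ℝ)/2 ∈ Ioo (0:ℝ) 1 := by norm_num
  have hbound_int : IntegrableOn (fun v => |h' v * R v| + C * |h' v|) (Ioo (0:ℝ) 1) :=
    hhRi'.abs.add (hhi'.abs.const_mul C)
  have h_bound : ∀ n, ∀ᵐ v ∂(volume.restrict (Ioo (0:ℝ) 1)),
      ‖h' v * g n v‖ ≤ |h' v * R v| + C * |h' v| := by
    intro n
    filter_upwards [ae_restrict_mem measurableSet_Ioo] with v hv
    have hgv : |g n v| ≤ |R v| + C := by
      rcases le_or_gt v (a n) with hva | hva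
      · have hclamp : min (max v (a n)) (b n) = a n := by
          rw [max_eq_right hva, min_eq_left (hab n)]
        have h1 : R v ≤ R (a n) := monotoneOn_quantileFn ρ hv (hanIoo n) hva
        have h2 : R (a n) ≤ R (1/2) := monotoneOn_quantileFn ρ (hanIoo n) hhalfIoo (hahalf n)
        have hg1 : g n v = R (a n) := by simp only [hgdef, hclamp]
        rw [hg1, hCdef]
        exact habs _ _ _ h1 h2
      · rcases le_or_gt v (b n) with hvb | hvb
        · have hclamp : min (max v (a n)) (b n) = v := by
            rw [max_eq_left hva.le, min_eq_left hvb]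
          have hg1 : g n v = R v := by simp only [hgdef, hclamp]
          rw [hg1]
          have : (0:ℝ) ≤ C := by rw [hCdef]; exact abs_nonneg _
          linarith [le_refl |R v|]
        · have hclamp : min (max v (a n)) (b n) = b n := by
            rw [max_eq_left (le_trans (hab n) hvb.le |>.trans le_rfl |> fun _ => le_trans (hab n) hvb.le), min_eq_right (le_trans le_rfl hvb.le)]
          have h1 : R (1/2) ≤ R (b n) := monotoneOn_quantileFn ρ hhalfIoo (hbnIoo n) (hhalfb n)
          have h2 : R (b n) ≤ R v := monotoneOn_quantileFn ρ (hbnIoo n) hv hvb.le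
          have hg1 : g n v = R (b n) := by simp only [hgdef, hclamp]
          rw [hg1, hCdef]
          have := habs _ _ _ h1 h2
          linarith
    calc ‖h' v * g n v‖ = |h' v| * |g n v| := by rw [Real.norm_eq_abs, abs_mul]
      _ ≤ |h' v| * (|R v| + C) := mul_le_mul_of_nonneg_left hgv (abs_nonneg _)
      _ = |h' v * R v| + C * |h' v| := by rw [abs_mul]; ring
  have h_lim : ∀ᵐ v ∂(volume.restrict (Ioo (0:ℝ) 1)),
      Tendsto (fun n => h' v * g n v) atTop (𝓝 (h' v * R v)) := by
    filter_upwards [ae_restrict_mem measurableSet_Ioo] with v hv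
    have hta : Tendsto a atTop (𝓝 0) := by
      have h1 : Tendsto (fun n : ℕ => (n:ℝ) + 2) atTop atTop :=
        Filter.tendsto_atTop_add_const_right _ 2 tendsto_natCast_atTop_atTop
      simpa [hadef, one_div, Pi.inv_def] using h1.inv_tendsto_atTop
    have hev : (fun n => h' v * g n v) =ᶠ[atTop] fun _ => h' v * R v := by
      have e1 : ∀ᶠ n in atTop, a n < v := hta.eventually_lt_const hv.1
      have e2 : ∀ᶠ n in atTop, a n < 1 - v := hta.eventually_lt_const (by linarith [hv.2])
      filter_upwards [e1, e2] with n h1 h2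
      have hclamp : min (max v (a n)) (b n) = v := by
        rw [max_eq_left h1.le, min_eq_left (by simp only [hbdef]; linarith)]
      simp only [hgdef, hclamp]
    exact Tendsto.congr' hev.symm tendsto_const_nhds
  have htend : Tendsto (fun n => ∫ v in Ioo (0:ℝ) 1, h' v * g n v) atTop
      (𝓝 (∫ v in Ioo (0:ℝ) 1, h' v * R v)) :=
    tendsto_integral_of_dominated_convergence _
      (fun n => (hm'.measurable.mul (hgmono n).measurable).aestronglyMeasurable)
      hbound_int h_bound h_lim
  have hfinal : ∫ v in Ioo (0:ℝ) 1, h' v * R v ≤ 0 :=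
    le_of_tendsto htend (Filter.Eventually.of_forall hcore)
  have heqR : ∫ v in Ioo (0:ℝ) 1, h' v * R v = ∫ v in Ioo (0:ℝ) 1, h v * R v := by
    apply integral_congr_ae
    filter_upwards [heq'] with v hv
    rw [hv]
  have hsub2 : ∫ v in Ioo (0:ℝ) 1, h v * R v
      = (∫ v in Ioo (0:ℝ) 1, Q v * R v) - ∫ v in Ioo (0:ℝ) 1, Q' v * R v := by
    have heq : (fun v => h v * R v) = fun v => Q v * R v - Q' v * R v := by
      ext v; simp only [hhdef]; ring
    rw [heq]
    exact integral_sub hQRi hQ'Ri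
  have hIcc1 : ∫ v in Icc (0:ℝ) 1, Q v * R v = ∫ v in Ioo (0:ℝ) 1, Q v * R v :=
    (setIntegral_congr_set Ioo_ae_eq_Icc).symm
  have hIcc2 : ∫ v in Icc (0:ℝ) 1, Q' v * R v = ∫ v in Ioo (0:ℝ) 1, Q' v * R v :=
    (setIntegral_congr_set Ioo_ae_eq_Icc).symm
  rw [hIcc1, hIcc2]
  linarith
end

section
/- Trimming bound: let Δ⁻ be an integrable random variable with integrated quantile function I and mean μ = I(1). For every δ ∈ (0,1] and every integrable random variable M with E[M] = μ and I_M(q) ≥ I(q) for all q ∈ [0,1], and every event A (in the probability space on which M lives, with M defined via a uniform U and A = {U ∈ [u, u+δ]} ⊆ [0,1]): the conditional mean satisfies I(δ)/δ ≤ E[M | U ∈ [u,u+δ]] ≤ (μ − I(1−δ))/δ. More precisely, for any measurable m : [0,1] → ℝ with U ~ U[0,1], E[m(U)] = μ, and m(U) ⪰_SSD Δ⁻: I(δ) ≤ ∫_u^{u+δ} m(s) ds ≤ μ − I(1−δ) for all [u, u+δ] ⊆ [0,1]. -/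
open MeasureTheory ProbabilityTheory Set

/-- The uniform distribution on `[0,1]`. -/
noncomputable def unif01 : Measure ℝ := volume.restrict (Set.Icc (0:ℝ) 1)

/-!
If `X` has law `θ`, `A` is an event of probability `δ` and `c` is the `δ`-quantile of `θ`, then
`∫_A X ≥ c δ - 𝔼 (c - X)⁺`, and transporting `𝔼 (c - X)⁺` to the quantile scale, where
`(c - Q_θ)⁺` vanishes beyond `δ`, shows that the right-hand side is `∫₀^δ Q_θ = I_θ(δ)`.
For `X = m(U)` second-order dominance gives `I_ν ≤ I_θ`; taking `A = [u, u + δ]` yields the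
lower bound, and taking its complement in `[0, 1]`, of probability `1 - δ`, yields the upper
bound because `𝔼 m(U) = ∫ x ∂ν`.
-/

open Filter

lemma volume_Iic_inter_Ioo_zero_one {c : ℝ} (hc : c ≤ 1) :
    volume (Iic c ∩ Ioo 0 1) = ENNReal.ofReal c := by
  refine le_antisymm ?_ ?_
  · calc volume (Iic c ∩ Ioo 0 1) ≤ volume (Ioc 0 c) :=
          measure_mono fun s hs => ⟨hs.2.1, hs.1⟩
      _ = ENNReal.ofReal c := by rw [Real.volume_Ioc, sub_zero]
  · calc ENNReal.ofReal c = volume (Ioo 0 c) := by rw [Real.volume_Ioo, sub_zero]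
      _ ≤ volume (Iic c ∩ Ioo 0 1) :=
          measure_mono fun s hs => ⟨hs.2.le, hs.1, hs.2.trans_le hc⟩

lemma ProbabilityTheory.bddBelow_setOf_le_cdf (θ : Measure ℝ) {s : ℝ} (hs : 0 < s) :
    BddBelow {x | s ≤ cdf θ x} := by
  obtain ⟨x₀, hx₀⟩ := eventually_atBot.mp ((tendsto_cdf_atBot θ).eventually_lt_const hs)
  exact ⟨x₀, fun x hx => le_of_not_gt fun hlt => (hx₀ x hlt.le).not_ge hx⟩

namespace quantileFn

variable (θ : Measure ℝ) [IsProbabilityMeasure θ]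

lemma eq_sInf_cdf (s : ℝ) : quantileFn θ s = sInf {x | s ≤ cdf θ x} := by
  simp_rw [quantileFn, cdf_eq_real, measureReal_def]

lemma le_iff_le_cdf {s x : ℝ} (hs0 : 0 < s) (hs1 : s < 1) :
    quantileFn θ s ≤ x ↔ s ≤ cdf θ x := by
  have hne : {x | s ≤ cdf θ x}.Nonempty := ((tendsto_cdf_atTop θ).eventually_const_le hs1).exists
  rw [eq_sInf_cdf]
  refine ⟨fun h => ?_, fun h => csInf_le (bddBelow_setOf_le_cdf θ hs0) h⟩
  have hright : ∀ y ∈ Ioi x, s ≤ cdf θ y := fun y hy => by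
    obtain ⟨z, hz, hzy⟩ := exists_lt_of_csInf_lt hne (h.trans_lt hy)
    exact hz.trans (monotone_cdf θ hzy.le)
  exact ge_of_tendsto (((cdf θ).right_continuous x).mono Ioi_subset_Ici_self).tendsto
    (eventually_nhdsWithin_of_forall hright)

lemma monotoneOn : MonotoneOn (quantileFn θ) (Ioo 0 1) := fun _ hs _ ht hst =>
  (le_iff_le_cdf θ hs.1 hs.2).mpr (hst.trans ((le_iff_le_cdf θ ht.1 ht.2).mp le_rfl))

lemma aemeasurable : AEMeasurable (quantileFn θ) (volume.restrict (Ioo 0 1)) :=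
  aemeasurable_restrict_of_monotoneOn measurableSet_Ioo (monotoneOn θ)

theorem map_volume_Ioo : (volume.restrict (Ioo 0 1)).map (quantileFn θ) = θ := by
  have : IsProbabilityMeasure (volume.restrict (Ioo (0 : ℝ) 1)) :=
    ⟨by simp [Real.volume_Ioo]⟩
  have := Measure.isProbabilityMeasure_map (aemeasurable θ)
  refine Measure.ext_of_Iic _ _ fun x => ?_
  have hpre : quantileFn θ ⁻¹' Iic x ∩ Ioo 0 1 = Iic (cdf θ x) ∩ Ioo 0 1 := by
    ext s
    simp only [mem_inter_iff, mem_preimage, mem_Iic, and_congr_left_iff]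
    exact fun hs => le_iff_le_cdf θ hs.1 hs.2
  rw [Measure.map_apply_of_aemeasurable (aemeasurable θ) measurableSet_Iic,
    Measure.restrict_apply' measurableSet_Ioo, hpre,
    volume_Iic_inter_Ioo_zero_one (cdf_le_one θ x), ofReal_cdf]

theorem integral_comp {g : ℝ → ℝ} (hg : AEStronglyMeasurable g θ) :
    ∫ s in Ioo 0 1, g (quantileFn θ s) = ∫ x, g x ∂θ := by
  conv_rhs => rw [← map_volume_Ioo θ]
  rw [integral_map (aemeasurable θ) (by rwa [map_volume_Ioo])]

theorem integrableOn_Ioo (hθ : Integrable id θ) : IntegrableOn (quantileFn θ) (Ioo 0 1) := by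
  rw [← map_volume_Ioo θ] at hθ
  exact (integrable_map_measure hθ.aestronglyMeasurable (aemeasurable θ)).mp hθ

end quantileFn

lemma iqf_eq_setIntegral_Ioo (θ : Measure ℝ) {δ : ℝ} (hδ : 0 ≤ δ) :
    iqf θ δ = ∫ s in Ioo 0 δ, quantileFn θ s := by
  rw [iqf, intervalIntegral.integral_of_le hδ, setIntegral_congr_set Ioo_ae_eq_Ioc.symm]

section iqf

variable (θ : Measure ℝ) [IsProbabilityMeasure θ]

lemma iqf_one : iqf θ 1 = ∫ x, x ∂θ := by
  rw [iqf_eq_setIntegral_Ioo θ zero_le_one]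
  exact quantileFn.integral_comp θ (g := id) aestronglyMeasurable_id

lemma iqf_eq_mul_sub_integral_posPart (hθ : Integrable id θ) {δ : ℝ} (hδ0 : 0 < δ)
    (hδ1 : δ < 1) :
    iqf θ δ = quantileFn θ δ * δ - ∫ x, max (quantileFn θ δ - x) 0 ∂θ := by
  set Q := quantileFn θ
  have hQ := quantileFn.integrableOn_Ioo θ hθ
  have hpos : EqOn (fun s => max (Q δ - Q s) 0) ((Ioo 0 δ).indicator fun s => Q δ - Q s)
      (Ioo 0 1) := fun s hs => by
    dsimp only
    rcases lt_or_ge s δ with hsδ | hδs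
    · rw [indicator_of_mem (show s ∈ Ioo 0 δ from ⟨hs.1, hsδ⟩), max_eq_left (sub_nonneg.mpr
        (quantileFn.monotoneOn θ hs ⟨hδ0, hδ1⟩ hsδ.le))]
    · rw [indicator_of_notMem fun h => h.2.not_ge hδs, max_eq_right (sub_nonpos.mpr
        (quantileFn.monotoneOn θ ⟨hδ0, hδ1⟩ hs hδs))]
  have hθpos : AEStronglyMeasurable (fun x => max (Q δ - x) 0) θ := by fun_prop
  rw [← quantileFn.integral_comp θ hθpos, setIntegral_congr_fun measurableSet_Ioo hpos,
    integral_indicator measurableSet_Ioo, Measure.restrict_restrict measurableSet_Ioo,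
    Ioo_inter_Ioo, max_self, min_eq_left hδ1.le, integral_sub (integrable_const _)
      (hQ.mono_set (Ioo_subset_Ioo_right hδ1.le)),
    setIntegral_const, iqf_eq_setIntegral_Ioo θ hδ0.le, Real.volume_real_Ioo_of_le hδ0.le]
  simp only [sub_zero, smul_eq_mul]
  ring

end iqf

section

variable {Ω : Type*} [MeasurableSpace Ω] {P : Measure Ω} {X : Ω → ℝ}

lemma mul_measureReal_sub_integral_posPart_le_setIntegral [IsFiniteMeasure P]
    (hX : Integrable X P) (A : Set Ω) (c : ℝ) :
    c * P.real A - ∫ ω, max (c - X ω) 0 ∂P ≤ ∫ ω in A, X ω ∂P := by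
  have hcX : Integrable (fun ω => c - X ω) P := (integrable_const c).sub hX
  calc c * P.real A - ∫ ω, max (c - X ω) 0 ∂P
      ≤ c * P.real A - ∫ ω in A, (c - X ω) ∂P := by
        gcongr
        calc ∫ ω in A, (c - X ω) ∂P ≤ ∫ ω in A, max (c - X ω) 0 ∂P :=
              integral_mono hcX.integrableOn hcX.pos_part.integrableOn fun _ => le_max_left _ _
          _ ≤ ∫ ω, max (c - X ω) 0 ∂P :=
              setIntegral_le_integral hcX.pos_part (ae_of_all _ fun _ => le_max_right _ _)
    _ = ∫ ω in A, X ω ∂P := by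
        rw [integral_sub (integrable_const c) hX.integrableOn, setIntegral_const, smul_eq_mul]
        ring

theorem iqf_map_le_setIntegral [IsProbabilityMeasure P] (hX : Integrable X P) {A : Set Ω}
    (hA : MeasurableSet A) : iqf (P.map X) (P.real A) ≤ ∫ ω in A, X ω ∂P := by
  have hXm := hX.aemeasurable
  have := Measure.isProbabilityMeasure_map hXm
  rcases measureReal_nonneg.eq_or_lt with h0 | hpos
  · rw [← h0, iqf, intervalIntegral.integral_same,
      setIntegral_measure_zero _ ((measureReal_eq_zero_iff).mp h0.symm)]
  -- `quantileFn _ 1` is a junk `sInf` when the law is unbounded above, so `δ = 1` is done directly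
  rcases (measureReal_le_one (μ := P)).eq_or_lt with h1 | hlt
  · have hAae : A ∈ ae P := by
      rw [mem_ae_iff, ← measureReal_eq_zero_iff, measureReal_compl hA, h1, probReal_univ, sub_self]
    rw [h1, iqf_one, integral_map (f := fun x => x) hXm aestronglyMeasurable_id,
      Measure.restrict_eq_self_of_ae_mem hAae]
  · have hid : Integrable id (P.map X) :=
      (integrable_map_measure aestronglyMeasurable_id hXm).mpr hX
    rw [iqf_eq_mul_sub_integral_posPart _ hid hpos hlt,
      integral_map hXm (by fun_prop)]
    exact mul_measureReal_sub_integral_posPart_le_setIntegral hX A _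

end

instance isProbabilityMeasure_unif01 : IsProbabilityMeasure unif01 := ⟨by simp [unif01]⟩

lemma iqf_map_unif01_le_setIntegral {m : ℝ → ℝ} (hmi : IntegrableOn m (Icc 0 1)) {A : Set ℝ}
    (hA : MeasurableSet A) (hAI : A ⊆ Icc 0 1) :
    iqf (unif01.map m) (volume.real A) ≤ ∫ s in A, m s := by
  have hrestrict : unif01.restrict A = volume.restrict A :=
    Measure.restrict_restrict_of_subset hAI
  have hreal : unif01.real A = volume.real A := by
    rw [← measureReal_restrict_apply_univ, hrestrict, measureReal_restrict_apply_univ]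
  simpa only [hreal, hrestrict] using iqf_map_le_setIntegral (P := unif01) hmi hA

theorem stmt_7_general (ν : Measure ℝ)
    (m : ℝ → ℝ) (hmi : IntegrableOn m (Set.Icc (0:ℝ) 1))
    (hmean : ∫ u in Set.Icc (0:ℝ) 1, m u = ∫ x, x ∂ν)
    (hssd : ∀ q ∈ Set.Icc (0:ℝ) 1, iqf ν q ≤ iqf (Measure.map m unif01) q) :
    ∀ u δ : ℝ, 0 < δ → 0 ≤ u → u + δ ≤ 1 →
      iqf ν δ ≤ (∫ s in u..(u + δ), m s) ∧
        (∫ s in u..(u + δ), m s) ≤ (∫ x, x ∂ν) - iqf ν (1 - δ) := by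
  intro u δ hδ hu huδ
  have key : ∀ A ⊆ Icc (0:ℝ) 1, MeasurableSet A → iqf ν (volume.real A) ≤ ∫ s in A, m s := by
    intro A hAI hA
    have hA1 : volume.real A ≤ 1 :=
      (measureReal_mono hAI measure_Icc_lt_top.ne).trans_eq (by simp)
    exact (hssd _ ⟨measureReal_nonneg, hA1⟩).trans (iqf_map_unif01_le_setIntegral hmi hA hAI)
  have hI : Ioc u (u + δ) ⊆ Icc 0 1 := fun s hs => ⟨hu.trans hs.1.le, hs.2.trans huδ⟩
  have hvol : volume.real (Ioc u (u + δ)) = δ := by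
    rw [Real.volume_real_Ioc_of_le (by linarith)]
    ring
  have hcompl :=
    key (Icc 0 1 \ Ioc u (u + δ)) sdiff_subset (measurableSet_Icc.diff measurableSet_Ioc)
  rw [measureReal_sdiff hI measurableSet_Ioc measure_Icc_lt_top.ne,
    Real.volume_real_Icc_of_le zero_le_one, sub_zero, hvol,
    setIntegral_sdiff measurableSet_Ioc hmi hI, hmean] at hcompl
  rw [intervalIntegral.integral_of_le (by linarith)]
  exact ⟨by simpa only [hvol] using key _ hI measurableSet_Ioc, by linarith⟩

/-- trimming bound: let `ν` be the law of `Δ⁻` with IQF `I` and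
mean `μ = I(1) = ∫ x ∂ν`. For any measurable `m : [0,1] → ℝ` with `U ∼ U[0,1]`,
`E[m(U)] = μ`, and `m(U) ⪰_SSD Δ⁻`, and any interval `[u, u+δ] ⊆ [0,1]` with
`δ > 0`:  `I(δ) ≤ ∫_u^{u+δ} m(s) ds ≤ μ − I(1−δ)`. -/
theorem stmt_7 (ν : Measure ℝ) [IsProbabilityMeasure ν]
    (hν : Integrable (fun x : ℝ => x) ν)
    (m : ℝ → ℝ) (hm : Measurable m) (hmi : IntegrableOn m (Set.Icc (0:ℝ) 1))
    (hmean : ∫ u in Set.Icc (0:ℝ) 1, m u = ∫ x, x ∂ν)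
    (hssd : ∀ q ∈ Set.Icc (0:ℝ) 1, iqf ν q ≤ iqf (Measure.map m unif01) q) :
    ∀ u δ : ℝ, 0 < δ → 0 ≤ u → u + δ ≤ 1 →
      iqf ν δ ≤ (∫ s in u..(u + δ), m s) ∧
        (∫ s in u..(u + δ), m s) ≤ (∫ x, x ∂ν) - iqf ν (1 - δ) :=
  stmt_7_general ν m hmi hmean hssd
end
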